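/- Let A = U − V be a convergent K-regular splitting of A ∈ ℝ^{n×n} and let U = F − G be a convergent K-weak regular splitting of type I. Then for every integer s ≥ 1, the two-stage iteration matrix T_s satisfies ρ(T_s) < 1. -/

import Mathlib

open Matrix Finset Filter

/-- A proper cone in `ℝ^n`: a closed, pointed, solid convex cone. -/
def IsProperCone {n : ℕ} (K : Set (Fin n → ℝ)) : Prop :=
  IsClosed K ∧ Convex ℝ K ∧ (∀ c : ℝ, 0 ≤ c → ∀ x ∈ K, c • x ∈ K) ∧
    K ∩ (-K) = {0} ∧ (interior K).Nonempty

/-- `M ≥_K 0`: the matrix `M` leaves the cone `K` invariant. -/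
def KNonneg {n : ℕ} (K : Set (Fin n → ℝ)) (M : Matrix (Fin n) (Fin n) ℝ) : Prop :=
  ∀ x ∈ K, M.mulVec x ∈ K

/-- Spectral radius: the supremum of the moduli of the complex eigenvalues. -/
noncomputable def specRad {n : ℕ} (M : Matrix (Fin n) (Fin n) ℝ) : ℝ :=
  sSup ((fun z : ℂ => ‖z‖) '' spectrum ℂ (M.map Complex.ofReal))

/-- `A = U - V` is a `K`-regular splitting. -/
def KRegularSplitting {n : ℕ} (K : Set (Fin n → ℝ))
    (A U V : Matrix (Fin n) (Fin n) ℝ) : Prop :=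
  A = U - V ∧ IsUnit U ∧ KNonneg K U⁻¹ ∧ KNonneg K V

/-- `A = U - V` is a `K`-weak regular splitting of type I. -/
def KWeakRegularSplittingI {n : ℕ} (K : Set (Fin n → ℝ))
    (A U V : Matrix (Fin n) (Fin n) ℝ) : Prop :=
  A = U - V ∧ IsUnit U ∧ KNonneg K U⁻¹ ∧ KNonneg K (U⁻¹ * V)

/-- `A = U - V` is a `K`-weak regular splitting of type II. -/
def KWeakRegularSplittingII {n : ℕ} (K : Set (Fin n → ℝ))
    (A U V : Matrix (Fin n) (Fin n) ℝ) : Prop :=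
  A = U - V ∧ IsUnit U ∧ KNonneg K U⁻¹ ∧ KNonneg K (V * U⁻¹)

/-- `A` is `K`-monotone: invertible with `A⁻¹ ≥_K 0`. -/
def KMonotone {n : ℕ} (K : Set (Fin n → ℝ)) (A : Matrix (Fin n) (Fin n) ℝ) : Prop :=
  IsUnit A ∧ KNonneg K A⁻¹

/-- Two-stage iteration matrix `T_s = (F⁻¹G)^s + Σ_{j=0}^{s-1} (F⁻¹G)^j F⁻¹ V`. -/
noncomputable def twoStageT {n : ℕ} (F G V : Matrix (Fin n) (Fin n) ℝ) (s : ℕ) :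
    Matrix (Fin n) (Fin n) ℝ :=
  (F⁻¹ * G) ^ s + (∑ j ∈ Finset.range s, (F⁻¹ * G) ^ j) * (F⁻¹ * V)

/-- `T̂_s = (GF⁻¹)^s + Σ_{j=0}^{s-1} (GF⁻¹)^j V F⁻¹`. -/
noncomputable def twoStageThat {n : ℕ} (F G V : Matrix (Fin n) (Fin n) ℝ) (s : ℕ) :
    Matrix (Fin n) (Fin n) ℝ :=
  (G * F⁻¹) ^ s + (∑ j ∈ Finset.range s, (G * F⁻¹) ^ j) * (V * F⁻¹)

/-- `Q_s = Σ_{j=0}^{s-1} (F⁻¹G)^j F⁻¹`. -/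
noncomputable def twoStageQ {n : ℕ} (F G : Matrix (Fin n) (Fin n) ℝ) (s : ℕ) :
    Matrix (Fin n) (Fin n) ℝ :=
  (∑ j ∈ Finset.range s, (F⁻¹ * G) ^ j) * F⁻¹

/-!
Write `H = F⁻¹G` and `P = U⁻¹V`. Since `F⁻¹U = 1 - H`, the geometric sum gives
`1 - T_s = (1 - H^s)(1 - P)`. The powers of `H` and `P` tend to zero (Gelfand's formula), so
both factors are inverted by Neumann series of `K`-nonnegative matrices and
`(1 - T_s)⁻¹ ≥_K 0`, while `T_s ≥_K 0` term by term. For such a `T`, the vector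
`u = (1 - T)⁻¹ w` with `w` interior to `K` is itself interior and satisfies `T u ≤_K l u` for
some `l < 1`. Every vector lies in an order interval `[-c u, c u]`, which `T^k` maps into
`[-c lᵏ u, c lᵏ u]`; as `K` is closed and pointed these intervals are bounded, so `T^k → 0`
and `ρ(T) < 1`.
-/

open Topology

variable {n : ℕ} {K : Set (Fin n → ℝ)}

namespace IsProperCone

theorem zero_mem (hK : IsProperCone K) : (0 : Fin n → ℝ) ∈ K := by
  obtain ⟨w, hw⟩ := hK.2.2.2.2
  simpa using hK.2.2.1 0 le_rfl w (interior_subset hw)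

theorem add_mem (hK : IsProperCone K) {x y : Fin n → ℝ} (hx : x ∈ K) (hy : y ∈ K) :
    x + y ∈ K := by
  have hmid := hK.2.1 hx hy (by norm_num : (0 : ℝ) ≤ 1 / 2) (by norm_num : (0 : ℝ) ≤ 1 / 2)
    (by norm_num)
  convert hK.2.2.1 2 (by norm_num) _ hmid using 1
  rw [smul_add, smul_smul, smul_smul]
  norm_num

theorem sum_mem (hK : IsProperCone K) {ι : Type*} {s : Finset ι} {f : ι → Fin n → ℝ}
    (h : ∀ i ∈ s, f i ∈ K) : ∑ i ∈ s, f i ∈ K :=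
  Finset.sum_induction f (· ∈ K) (fun _ _ => hK.add_mem) hK.zero_mem h

theorem exists_smul_sub_mem (hK : IsProperCone K) {u : Fin n → ℝ} (hu : u ∈ interior K)
    (v : Fin n → ℝ) : ∃ c : ℝ, 0 < c ∧ c • u - v ∈ K := by
  have hcont : Continuous fun t : ℝ => u - t • v :=
    continuous_const.sub (continuous_id.smul continuous_const)
  have hev : ∀ᶠ t in 𝓝 (0 : ℝ), u - t • v ∈ K :=
    (hcont.tendsto' 0 u (by simp)).eventually (mem_interior_iff_mem_nhds.mp hu)
  obtain ⟨t, ht, htK⟩ := hev.exists_gt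
  refine ⟨t⁻¹, inv_pos.mpr ht, ?_⟩
  simpa [smul_sub, smul_smul, inv_mul_cancel₀ ht.ne'] using hK.2.2.1 t⁻¹ (inv_pos.mpr ht).le _ htK

theorem smul_sub_mem_of_le (hK : IsProperCone K) {u v : Fin n → ℝ} (hu : u ∈ K) {c c' : ℝ}
    (hc : c ≤ c') (hv : c • u - v ∈ K) : c' • u - v ∈ K := by
  convert hK.add_mem hv (hK.2.2.1 (c' - c) (sub_nonneg.mpr hc) u hu) using 1
  module

theorem isBounded_orderInterval (hK : IsProperCone K) (u : Fin n → ℝ) :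
    Bornology.IsBounded {v | u - v ∈ K ∧ u + v ∈ K} := by
  by_contra hunb
  simp only [isBounded_iff_forall_norm_le, not_exists, not_forall, not_le] at hunb
  choose v hv hlarge using fun m : ℕ => hunb m
  have hpos : ∀ m, 0 < ‖v m‖ := fun m => (Nat.cast_nonneg m).trans_lt (hlarge m)
  have hsphere : ∀ m, ‖v m‖⁻¹ • v m ∈ Metric.sphere (0 : Fin n → ℝ) 1 := fun m => by
    simp [norm_smul, (hpos m).ne']
  obtain ⟨a, ha, φ, hφ, hlim⟩ := (isCompact_sphere (0 : Fin n → ℝ) 1).tendsto_subseq hsphere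
  have hscale : Tendsto (fun m => ‖v (φ m)‖⁻¹ • u) atTop (𝓝 0) := by
    have hnorm : Tendsto (fun m => ‖v (φ m)‖) atTop atTop :=
      tendsto_atTop_mono (fun m => (hlarge (φ m)).le)
        (tendsto_natCast_atTop_atTop.comp hφ.tendsto_atTop)
    simpa using (tendsto_inv_atTop_zero.comp hnorm).smul_const u
  have hmem : ∀ m, ‖v (φ m)‖⁻¹ • u - ‖v (φ m)‖⁻¹ • v (φ m) ∈ K ∧
      ‖v (φ m)‖⁻¹ • u + ‖v (φ m)‖⁻¹ • v (φ m) ∈ K := fun m => by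
    rw [← smul_sub, ← smul_add]
    exact ⟨hK.2.2.1 _ (inv_nonneg.mpr (norm_nonneg _)) _ (hv (φ m)).1,
      hK.2.2.1 _ (inv_nonneg.mpr (norm_nonneg _)) _ (hv (φ m)).2⟩
  have hneg_mem : -a ∈ K := hK.1.mem_of_tendsto (by simpa using hscale.sub hlim)
    (Eventually.of_forall fun m => (hmem m).1)
  have ha_mem : a ∈ K := hK.1.mem_of_tendsto (by simpa using hscale.add hlim)
    (Eventually.of_forall fun m => (hmem m).2)
  have ha0 : a ∈ K ∩ -K := ⟨ha_mem, Set.mem_neg.mpr hneg_mem⟩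
  rw [hK.2.2.2.1, Set.mem_singleton_iff] at ha0
  simp [ha0] at ha

end IsProperCone

namespace KNonneg

theorem mul {M N : Matrix (Fin n) (Fin n) ℝ} (hM : KNonneg K M) (hN : KNonneg K N) :
    KNonneg K (M * N) := fun x hx => by
  rw [← Matrix.mulVec_mulVec]
  exact hM _ (hN x hx)

theorem pow {M : Matrix (Fin n) (Fin n) ℝ} (hM : KNonneg K M) (k : ℕ) : KNonneg K (M ^ k) := by
  induction k with
  | zero => simp [KNonneg]
  | succ k ih => rw [pow_succ]; exact ih.mul hM

theorem add (hK : IsProperCone K) {M N : Matrix (Fin n) (Fin n) ℝ} (hM : KNonneg K M)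
    (hN : KNonneg K N) : KNonneg K (M + N) := fun x hx => by
  rw [Matrix.add_mulVec]
  exact hK.add_mem (hM x hx) (hN x hx)

theorem sum (hK : IsProperCone K) {ι : Type*} {s : Finset ι} {M : ι → Matrix (Fin n) (Fin n) ℝ}
    (hM : ∀ i ∈ s, KNonneg K (M i)) : KNonneg K (∑ i ∈ s, M i) := fun x hx => by
  rw [Matrix.sum_mulVec]
  exact hK.sum_mem fun i hi => hM i hi x hx

theorem mulVec_mem_interior {M : Matrix (Fin n) (Fin n) ℝ} (hM : KNonneg K M) (hMu : IsUnit M)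
    {x : Fin n → ℝ} (hx : x ∈ interior K) : M *ᵥ x ∈ interior K := by
  have hdet := (Matrix.isUnit_iff_isUnit_det M).mp hMu
  refine interior_maximal (t := (M⁻¹ *ᵥ ·) ⁻¹' interior K) (fun v hv => ?_)
    (isOpen_interior.preimage (continuous_const.matrix_mulVec continuous_id)) ?_
  · simpa [Matrix.mulVec_mulVec, Matrix.mul_nonsing_inv _ hdet] using hM _ (interior_subset hv)
  · simpa [Matrix.mulVec_mulVec, Matrix.nonsing_inv_mul _ hdet] using hx

end KNonneg

theorem isClosed_setOf_kNonneg (hK : IsClosed K) :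
    IsClosed {M : Matrix (Fin n) (Fin n) ℝ | KNonneg K M} := by
  simp only [KNonneg, Set.ofPred_forall]
  exact isClosed_biInter fun x _ => hK.preimage (continuous_id.matrix_mulVec continuous_const)

theorem isUnit_one_sub_of_tendsto_pow {M : Matrix (Fin n) (Fin n) ℝ}
    (hM : Tendsto (fun k => M ^ k) atTop (𝓝 0)) : IsUnit (1 - M) := by
  rw [Matrix.isUnit_iff_isUnit_det, isUnit_iff_ne_zero]
  intro hdet
  have hlim : Tendsto (fun k => (1 - M ^ k).det) atTop (𝓝 1) := by
    have h := (continuous_id.matrix_det.tendsto _).comp ((tendsto_const_nhds (x := 1)).sub hM)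
    simp only [Function.comp_def, id, sub_zero, Matrix.det_one] at h
    exact h
  have hzero : ∀ k, (1 - M ^ k).det = 0 := fun k => by
    rw [← geom_sum_mul_neg, Matrix.det_mul, hdet, mul_zero]
  simp only [hzero] at hlim
  exact zero_ne_one (tendsto_nhds_unique tendsto_const_nhds hlim)

theorem KNonneg.inv_one_sub (hK : IsProperCone K) {M : Matrix (Fin n) (Fin n) ℝ}
    (hMK : KNonneg K M) (hM : Tendsto (fun k => M ^ k) atTop (𝓝 0)) : KNonneg K (1 - M)⁻¹ := by
  have hdet := (Matrix.isUnit_iff_isUnit_det _).mp (isUnit_one_sub_of_tendsto_pow hM)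
  have hneumann : Tendsto (fun k => ∑ i ∈ Finset.range k, M ^ i) atTop (𝓝 (1 - M)⁻¹) := by
    have hpartial : ∀ k, ∑ i ∈ Finset.range k, M ^ i = (1 - M ^ k) * (1 - M)⁻¹ := fun k => by
      rw [← geom_sum_mul_neg, mul_assoc, Matrix.mul_nonsing_inv _ hdet, mul_one]
    simpa [hpartial] using ((tendsto_const_nhds (x := 1)).sub hM).mul_const (1 - M)⁻¹
  exact (isClosed_setOf_kNonneg hK.1).mem_of_tendsto hneumann
    (Eventually.of_forall fun k => KNonneg.sum hK fun i _ => hMK.pow i)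

theorem norm_le_specRad {M : Matrix (Fin n) (Fin n) ℝ} {μ : ℂ}
    (hμ : μ ∈ spectrum ℂ (M.map Complex.ofReal)) : ‖μ‖ ≤ specRad M :=
  le_csSup ((M.map Complex.ofReal).finite_spectrum.image _).bddAbove ⟨μ, hμ, rfl⟩

theorem specRad_lt_one_of_forall_norm_lt_one {M : Matrix (Fin n) (Fin n) ℝ}
    (h : ∀ μ ∈ spectrum ℂ (M.map Complex.ofReal), ‖μ‖ < 1) : specRad M < 1 := by
  rcases (spectrum ℂ (M.map Complex.ofReal)).eq_empty_or_nonempty with hempty | hne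
  · simp [specRad, hempty]
  · rw [specRad, Set.Finite.csSup_lt_iff ((M.map Complex.ofReal).finite_spectrum.image _)
      (hne.image _)]
    rintro _ ⟨μ, hμ, rfl⟩
    exact h μ hμ

theorem map_ofReal_pow (M : Matrix (Fin n) (Fin n) ℝ) (k : ℕ) :
    (M ^ k).map Complex.ofReal = M.map Complex.ofReal ^ k :=
  Matrix.map_pow M Complex.ofRealHom k

theorem specRad_lt_one_of_tendsto_pow {M : Matrix (Fin n) (Fin n) ℝ}
    (hM : Tendsto (fun k => M ^ k) atTop (𝓝 0)) : specRad M < 1 := by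
  refine specRad_lt_one_of_forall_norm_lt_one fun μ hμ => ?_
  rw [← Matrix.spectrum_toLin', ← Module.End.hasEigenvalue_iff_mem_spectrum] at hμ
  obtain ⟨z, hz⟩ := hμ.exists_hasEigenvector
  obtain ⟨i, hi⟩ : ∃ i, z i ≠ 0 := Function.ne_iff.mp hz.right
  have hpow : ∀ k, (M ^ k).map Complex.ofReal *ᵥ z = μ ^ k • z := fun k => by
    rw [map_ofReal_pow, ← Matrix.toLin'_apply]
    have h : Matrix.toLinAlgEquiv' (M.map Complex.ofReal ^ k) = _ := map_pow _ _ k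
    exact h ▸ hz.pow_apply k
  have hlim : Tendsto (fun k => ((M ^ k).map Complex.ofReal *ᵥ z) i) atTop (𝓝 0) := by
    have hcont : Continuous fun N : Matrix (Fin n) (Fin n) ℝ => (N.map Complex.ofReal *ᵥ z) i :=
      ((continuous_apply i).comp
        ((continuous_id.matrix_map Complex.continuous_ofReal).matrix_mulVec continuous_const))
    simpa [Function.comp_def] using (hcont.tendsto 0).comp hM
  simp only [hpow, Pi.smul_apply, smul_eq_mul] at hlim
  rw [← tendsto_pow_atTop_nhds_zero_iff_norm_lt_one]
  simpa [hi] using hlim.mul_const (z i)⁻¹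

section Gelfand

attribute [local instance] Matrix.linftyOpNormedRing Matrix.linftyOpNormedAlgebra

theorem tendsto_pow_of_specRad_lt_one {M : Matrix (Fin n) (Fin n) ℝ} (hM : specRad M < 1) :
    Tendsto (fun k => M ^ k) atTop (𝓝 0) := by
  obtain ⟨r, hr, hr1⟩ := exists_between (max_lt hM one_pos)
  have hr0 : 0 < r := (le_max_right _ _).trans_lt hr
  have hradius : spectralRadius ℂ (M.map Complex.ofReal) < ENNReal.ofReal r :=
    (iSup₂_le fun μ hμ => by
        rw [← enorm_eq_nnnorm, ← ofReal_norm]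
        exact ENNReal.ofReal_le_ofReal (norm_le_specRad hμ)).trans_lt
      ((ENNReal.ofReal_lt_ofReal_iff hr0).mpr ((le_max_left _ _).trans_lt hr))
  have hnorm : ∀ᶠ k : ℕ in atTop, ‖M.map Complex.ofReal ^ k‖ ≤ r ^ k := by
    filter_upwards [(spectrum.pow_norm_pow_one_div_tendsto_nhds_spectralRadius _).eventually_lt_const
      hradius, eventually_gt_atTop 0] with k hk hk0
    have hk' : ‖M.map Complex.ofReal ^ k‖ ^ (k : ℝ)⁻¹ < r := by
      rwa [ENNReal.ofReal_lt_ofReal_iff hr0, one_div] at hk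
    rw [Real.rpow_inv_lt_iff_of_pos (norm_nonneg _) hr0.le (by exact_mod_cast hk0),
      Real.rpow_natCast] at hk'
    exact hk'.le
  have hmap : Tendsto (fun k => M.map Complex.ofReal ^ k) atTop (𝓝 0) :=
    squeeze_zero_norm' hnorm (tendsto_pow_atTop_nhds_zero_of_lt_one hr0.le hr1)
  have hre := ((continuous_id.matrix_map Complex.continuous_re).tendsto 0).comp hmap
  simpa [Function.comp_def, ← map_ofReal_pow, Matrix.map_map] using hre

end Gelfand

theorem tendsto_of_forall_tendsto_mulVec {ι m o R : Type*} [Fintype o] [DecidableEq o]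
    [NonAssocSemiring R] [TopologicalSpace R] {l : Filter ι} {f : ι → Matrix m o R}
    (h : ∀ v, Tendsto (fun k => f k *ᵥ v) l (𝓝 0)) : Tendsto f l (𝓝 0) := by
  refine tendsto_pi_nhds.mpr fun i => tendsto_pi_nhds.mpr fun j => ?_
  simpa [Matrix.mulVec_single_one] using tendsto_pi_nhds.mp (h (Pi.single j 1)) i

namespace KNonneg

theorem tendsto_pow_zero_of_smul_sub_mulVec_mem (hK : IsProperCone K)
    {T : Matrix (Fin n) (Fin n) ℝ} (hT : KNonneg K T) {u : Fin n → ℝ} (hu : u ∈ interior K)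
    {l : ℝ} (hl0 : 0 < l) (hl1 : l < 1) (hTu : l • u - T *ᵥ u ∈ K) :
    Tendsto (fun k => T ^ k) atTop (𝓝 0) := by
  have hdom : ∀ {c : ℝ} {v : Fin n → ℝ}, 0 ≤ c → c • u - v ∈ K →
      ∀ k, (c * l ^ k) • u - T ^ k *ᵥ v ∈ K := by
    intro c v hc hv k
    induction k with
    | zero => simpa using hv
    | succ k ih =>
      convert hK.add_mem (hT _ ih) (hK.2.2.1 (c * l ^ k) (by positivity) _ hTu) using 1
      rw [Matrix.mulVec_sub, Matrix.mulVec_smul, pow_succ' T, ← Matrix.mulVec_mulVec]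
      module
  obtain ⟨B, hB⟩ := isBounded_iff_forall_norm_le.mp (hK.isBounded_orderInterval u)
  refine tendsto_of_forall_tendsto_mulVec fun v => ?_
  obtain ⟨c₁, hc₁, hv₁⟩ := hK.exists_smul_sub_mem hu v
  obtain ⟨c₂, hc₂, hv₂⟩ := hK.exists_smul_sub_mem hu (-v)
  have hsub := hK.smul_sub_mem_of_le (interior_subset hu) (le_add_of_nonneg_right hc₂.le) hv₁
  have hadd := hK.smul_sub_mem_of_le (interior_subset hu) (le_add_of_nonneg_left hc₁.le) hv₂
  have hbound : ∀ k, ‖T ^ k *ᵥ v‖ ≤ (c₁ + c₂) * B * l ^ k := fun k => by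
    have hck : 0 < (c₁ + c₂) * l ^ k := by positivity
    have hscale : ∀ {x : Fin n → ℝ}, ((c₁ + c₂) * l ^ k) • u - x ∈ K →
        u - ((c₁ + c₂) * l ^ k)⁻¹ • x ∈ K := fun hx => by
      have h := hK.2.2.1 _ (inv_nonneg.mpr hck.le) _ hx
      rwa [smul_sub, smul_smul, inv_mul_cancel₀ hck.ne', one_smul] at h
    have := hB (((c₁ + c₂) * l ^ k)⁻¹ • (T ^ k *ᵥ v))
      ⟨hscale (hdom (by positivity) hsub k), by
        simpa [Matrix.mulVec_neg] using hscale (hdom (by positivity) hadd k)⟩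
    rw [norm_smul, norm_inv, Real.norm_of_nonneg hck.le, inv_mul_le_iff₀ hck] at this
    linarith
  exact squeeze_zero_norm hbound
    (by simpa using (tendsto_pow_atTop_nhds_zero_of_lt_one hl0.le hl1).const_mul ((c₁ + c₂) * B))

theorem specRad_lt_one_of_inv_one_sub (hK : IsProperCone K) {T : Matrix (Fin n) (Fin n) ℝ}
    (hT : KNonneg K T) (hunit : IsUnit (1 - T)) (hinv : KNonneg K (1 - T)⁻¹) :
    specRad T < 1 := by
  obtain ⟨w, hw⟩ := hK.2.2.2.2
  set u := (1 - T)⁻¹ *ᵥ w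
  have hu : u ∈ interior K :=
    hinv.mulVec_mem_interior (Matrix.isUnit_nonsing_inv_iff.mpr hunit) hw
  have hTu : u - T *ᵥ u = w := by
    have hdet := (Matrix.isUnit_iff_isUnit_det _).mp hunit
    calc u - T *ᵥ u = (1 - T) *ᵥ u := by rw [Matrix.sub_mulVec, Matrix.one_mulVec]
      _ = w := by rw [Matrix.mulVec_mulVec, Matrix.mul_nonsing_inv _ hdet, Matrix.one_mulVec]
  obtain ⟨c, hc, hcw⟩ := hK.exists_smul_sub_mem hw u
  have hcw' := hK.smul_sub_mem_of_le (interior_subset hw) (le_add_of_nonneg_right zero_le_one) hcw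
  have hδ : (c + 1)⁻¹ < 1 := inv_lt_one_of_one_lt₀ (by linarith)
  refine specRad_lt_one_of_tendsto_pow (hT.tendsto_pow_zero_of_smul_sub_mulVec_mem hK hu
    (l := 1 - (c + 1)⁻¹) (sub_pos.mpr hδ) (sub_lt_self _ (by positivity)) ?_)
  convert hK.2.2.1 (c + 1)⁻¹ (by positivity) _ hcw' using 1
  rw [smul_sub, smul_smul, inv_mul_cancel₀ (by positivity), one_smul, ← hTu]
  module

end KNonneg

theorem kNonneg_twoStageT (hK : IsProperCone K) {F G V : Matrix (Fin n) (Fin n) ℝ}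
    (hH : KNonneg K (F⁻¹ * G)) (hF : KNonneg K F⁻¹) (hV : KNonneg K V) (s : ℕ) :
    KNonneg K (twoStageT F G V s) :=
  (hH.pow s).add hK ((KNonneg.sum hK fun j _ => hH.pow j).mul (hF.mul hV))

theorem twoStageT_eq (F G V : Matrix (Fin n) (Fin n) ℝ) (s : ℕ) :
    twoStageT F G V s = (F⁻¹ * G) ^ s + twoStageQ F G s * V := by
  rw [twoStageT, twoStageQ, mul_assoc]

theorem twoStageQ_mul {U F G : Matrix (Fin n) (Fin n) ℝ} (hUFG : U = F - G) (hF : IsUnit F)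
    (s : ℕ) : twoStageQ F G s * U = 1 - (F⁻¹ * G) ^ s := by
  rw [twoStageQ, mul_assoc, hUFG, Matrix.mul_sub,
    Matrix.nonsing_inv_mul _ ((Matrix.isUnit_iff_isUnit_det F).mp hF), geom_sum_mul_neg]

theorem one_sub_twoStageT {U V F G : Matrix (Fin n) (Fin n) ℝ} (hUFG : U = F - G)
    (hF : IsUnit F) (hU : IsUnit U) (s : ℕ) :
    1 - twoStageT F G V s = (1 - (F⁻¹ * G) ^ s) * (1 - U⁻¹ * V) := by
  have hUU : U * U⁻¹ = 1 := Matrix.mul_nonsing_inv _ ((Matrix.isUnit_iff_isUnit_det U).mp hU)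
  calc 1 - twoStageT F G V s = (1 - (F⁻¹ * G) ^ s) - twoStageQ F G s * V := by
        rw [twoStageT_eq]; abel
    _ = (1 - (F⁻¹ * G) ^ s) - twoStageQ F G s * U * (U⁻¹ * V) := by
        rw [mul_assoc _ U, ← mul_assoc U, hUU, one_mul]
    _ = (1 - (F⁻¹ * G) ^ s) * (1 - U⁻¹ * V) := by
        rw [twoStageQ_mul hUFG hF, mul_sub, mul_one]

theorem stmt_3 {n : ℕ} (K : Set (Fin n → ℝ)) (hK : IsProperCone K)
    (A U V F G : Matrix (Fin n) (Fin n) ℝ)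
    (houter : KRegularSplitting K A U V) (houterconv : specRad (U⁻¹ * V) < 1)
    (hinner : KWeakRegularSplittingI K U F G) (hinnerconv : specRad (F⁻¹ * G) < 1) :
    ∀ s : ℕ, 1 ≤ s → specRad (twoStageT F G V s) < 1 := by
  intro s hs
  obtain ⟨-, hU, hUinv, hV⟩ := houter
  obtain ⟨hUFG, hF, hFinv, hH⟩ := hinner
  have hP := tendsto_pow_of_specRad_lt_one houterconv
  have hHs : Tendsto (fun k => ((F⁻¹ * G) ^ s) ^ k) atTop (𝓝 0) := by
    simpa only [← pow_mul, Function.comp_def, id] using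
      (tendsto_pow_of_specRad_lt_one hinnerconv).comp (tendsto_id.const_mul_atTop' hs)
  have hT := one_sub_twoStageT (V := V) hUFG hF hU s
  refine (kNonneg_twoStageT hK hH hFinv hV s).specRad_lt_one_of_inv_one_sub hK ?_ ?_
  · rw [hT]
    exact (isUnit_one_sub_of_tendsto_pow hHs).mul (isUnit_one_sub_of_tendsto_pow hP)
  · rw [hT, Matrix.mul_inv_rev]
    exact (KNonneg.inv_one_sub hK (hUinv.mul hV) hP).mul (KNonneg.inv_one_sub hK (hH.pow s) hHs)
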